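/- Let L be a Lie algebra over a commutative ring, and suppose L decomposes as a direct sum of submodules L = L₋ ⊕ L₊ in which both L₋ and L₊ are Lie subalgebras of L. Let π : L → L denote the linear projection onto L₋ along L₊. Then for any elements A, B, C ∈ L with ⁅A, B⁆ = 0, one has ⁅π⁅πA, B⁆, C⁆ + ⁅πB, ⁅πA, C⁆⁆ − ⁅π⁅πB, A⁆, C⁆ − ⁅πA, ⁅πB, C⁆⁆ = 0. -/
import Mathlib


/-- For a Lie algebra `L = L₋ ⊕ L₊` (internal direct sum of submodules,
both Lie subalgebras) with projection `π` onto `L₋` along `L₊`, and `A B C : L` with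
`⁅A, B⁆ = 0`, one has
`⁅π⁅πA, B⁆, C⁆ + ⁅πB, ⁅πA, C⁆⁆ − ⁅π⁅πB, A⁆, C⁆ − ⁅πA, ⁅πB, C⁆⁆ = 0`. -/
theorem stmt_1 {R : Type*} [CommRing R] {L : Type*} [LieRing L] [LieAlgebra R L]
    (Lneg Lpos : LieSubalgebra R L)
    (hcompl : IsCompl Lneg.toSubmodule Lpos.toSubmodule)
    (π : L →ₗ[R] L)
    (hmem : ∀ x : L, π x ∈ Lneg)
    (hid : ∀ x ∈ Lneg, π x = x)
    (hker : ∀ x ∈ Lpos, π x = 0)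
    (A B C : L) (hAB : ⁅A, B⁆ = 0) :
    ⁅π ⁅π A, B⁆, C⁆ + ⁅π B, ⁅π A, C⁆⁆ - ⁅π ⁅π B, A⁆, C⁆ - ⁅π A, ⁅π B, C⁆⁆ = 0 := by
  -- every element minus its projection lies in `Lpos`
  have hpos : ∀ x : L, x - π x ∈ Lpos := by
    intro x
    have htop : Lneg.toSubmodule ⊔ Lpos.toSubmodule = ⊤ :=
      codisjoint_iff.mp hcompl.codisjoint
    have hx : x ∈ Lneg.toSubmodule ⊔ Lpos.toSubmodule := by
      rw [htop]; trivial
    obtain ⟨a, ha, b, hb, rfl⟩ := Submodule.mem_sup.mp hx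
    have : π (a + b) = a := by rw [map_add, hid a ha, hker b hb, add_zero]
    rw [this]
    simpa using hb
  have key : π ⁅π A, B⁆ - π ⁅π B, A⁆ = ⁅π A, π B⁆ := by
    have h1 : ⁅π A, B⁆ - ⁅π B, A⁆ = ⁅π A, π B⁆ - ⁅A - π A, B - π B⁆ := by
      rw [← lie_skew (π B) A]
      simp only [sub_lie, lie_sub, hAB]
      abel
    rw [← map_sub, h1, map_sub]
    have h2 : π ⁅π A, π B⁆ = ⁅π A, π B⁆ := hid _ (Lneg.lie_mem (hmem A) (hmem B))
    have h3 : π ⁅A - π A, B - π B⁆ = 0 := hker _ (Lpos.lie_mem (hpos A) (hpos B))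
    rw [h2, h3, sub_zero]
  have h4 : ⁅π ⁅π A, B⁆, C⁆ - ⁅π ⁅π B, A⁆, C⁆ = ⁅⁅π A, π B⁆, C⁆ := by
    rw [← sub_lie, key]
  have h5 : ⁅π ⁅π A, B⁆, C⁆ + ⁅π B, ⁅π A, C⁆⁆ - ⁅π ⁅π B, A⁆, C⁆ - ⁅π A, ⁅π B, C⁆⁆
      = ⁅⁅π A, π B⁆, C⁆ + ⁅π B, ⁅π A, C⁆⁆ - ⁅π A, ⁅π B, C⁆⁆ := by
    rw [← h4]; abel
  rw [h5, lie_lie]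
  abel
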